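/- arXiv:1708.04864 — 12 statements merged into one kernel-verified Lean document; each statement's English description precedes it below -/
import Mathlib

section
/- Let Σ be a finite alphabet with at least two letters, let 𝒜 be a synchronizing automaton over Σ with n states, and let M = 𝓜(Syn(𝒜)) be the set of minimal reset words of 𝒜. If for some natural number ℓ there exists a word x of length ℓ over Σ that is not a factor of any word of M, then 𝒜 has a reset word of length at most n(n−1)/2 + 2ℓ. -/
/-- The action of a word on a state: `actW δ q w` is `q · w`. -/
def actW {A Q : Type*} (δ : Q → A → Q) (q : Q) (w : List A) : Q := w.foldl δ q

/-- The set of reset (synchronizing) words of the automaton `(Q, δ)`. -/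
def SynSet {A Q : Type*} (δ : Q → A → Q) : Set (List A) :=
  {w | ∃ q : Q, ∀ p : Q, actW δ p w = q}

/-- `I` is a two-sided ideal of `Σ*`. -/
def IsIdealLang {A : Type*} (I : Set (List A)) : Prop :=
  ∀ x u y : List A, u ∈ I → x ++ u ++ y ∈ I

/-- The set of minimal words of an ideal: `𝓜(I) = I \ (Σ⁺I ∪ IΣ⁺)`. -/
def MinWords {A : Type*} (I : Set (List A)) : Set (List A) :=
  I \ ({w | ∃ x u : List A, x ≠ [] ∧ u ∈ I ∧ w = x ++ u} ∪
       {w | ∃ u x : List A, u ∈ I ∧ x ≠ [] ∧ w = u ++ x})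

/-!
If no minimal reset word contains `x`, then a reset word `α x β` can be cut at this occurrence
of `x`: `α x` or `x β` is already reset. Indeed, a reset word containing `x` is not minimal,
so it stays reset after removing its first or its last letter; repeat until the occurrence of
`x` sits at one end.

Suppose `x` is not reset and let `α x` be a non-reset word. Two distinct states of `Q·αx` are
merged modulo `x` by some word `γ` with `|γ| ≤ n(n-1)/2`: along a shortest merging word no
unordered pair of distinct states repeats. Then `Q·αxγx` is strictly smaller than `Q·αx`; either
`αxγx` is reset, and cutting it at the first `x` leaves the reset word `xγx` (as `αx` is not
reset), or we repeat with `αxγ` in place of `α`.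
-/

open Set

section Ideal

variable {A : Type*} {I : Set (List A)}

theorem IsIdealLang.append_mem_left (hI : IsIdealLang I) (u : List A) {v : List A} (hv : v ∈ I) :
    u ++ v ∈ I := by
  simpa using hI u v [] hv

theorem IsIdealLang.append_mem_right (hI : IsIdealLang I) {u : List A} (hu : u ∈ I)
    (v : List A) : u ++ v ∈ I := by
  simpa using hI [] u v hu

theorem IsIdealLang.tail_mem_or_dropLast_mem (hI : IsIdealLang I) {w : List A} (hw : w ∈ I)
    (hmin : w ∉ MinWords I) : w.tail ∈ I ∨ w.dropLast ∈ I := by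
  have : w ∈ {w | ∃ y u, y ≠ [] ∧ u ∈ I ∧ w = y ++ u} ∪
      {w | ∃ u y, u ∈ I ∧ y ≠ [] ∧ w = u ++ y} := by
    by_contra h
    exact hmin ⟨hw, h⟩
  rcases this with ⟨y, u, hy, hu, rfl⟩ | ⟨u, y, hu, hy, rfl⟩
  · left
    rw [List.tail_append_of_ne_nil hy]
    exact hI.append_mem_left _ hu
  · right
    rw [List.dropLast_append_of_ne_nil hy]
    exact hI.append_mem_right hu _

theorem IsIdealLang.append_mem_or_append_mem (hI : IsIdealLang I) {x : List A}
    (hx : ∀ w ∈ MinWords I, ¬ x <:+: w) (α β : List A) (h : α ++ x ++ β ∈ I) :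
    α ++ x ∈ I ∨ x ++ β ∈ I := by
  induction hn : α.length + β.length using Nat.strong_induction_on generalizing α β with
  | _ n ih =>
    rcases α with _ | ⟨a, α⟩
    · right
      simpa using h
    rcases List.eq_nil_or_concat' β with rfl | ⟨β, b, rfl⟩
    · left
      simpa using h
    have hmin : a :: α ++ x ++ (β ++ [b]) ∉ MinWords I := fun hm =>
      hx _ hm ⟨a :: α, β ++ [b], rfl⟩
    rcases hI.tail_mem_or_dropLast_mem h hmin with ht | hd
    · simp only [List.cons_append, List.tail_cons] at ht
      rcases ih _ (by simp [← hn]) α (β ++ [b]) ht rfl with h' | h'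
      · exact Or.inl (by simpa using hI.append_mem_left [a] h')
      · exact Or.inr h'
    · rw [← List.append_assoc, List.dropLast_concat] at hd
      rcases ih _ (by simp [← hn]) (a :: α) β hd rfl with h' | h'
      · exact Or.inl h'
      · exact Or.inr (by simpa using hI.append_mem_right h' [b])

end Ideal

section Automaton

variable {A Q : Type*} (δ : Q → A → Q)

theorem actW_append (q : Q) (u v : List A) : actW δ q (u ++ v) = actW δ (actW δ q u) v :=
  List.foldl_append ..

theorem synSet_isIdealLang : IsIdealLang (SynSet δ) := by
  rintro u w v ⟨q, hq⟩
  exact ⟨actW δ q v, fun p => by rw [actW_append, actW_append, hq]⟩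

theorem exists_actW_ne_of_notMem_synSet [Nonempty Q] {w : List A} (hw : w ∉ SynSet δ) :
    ∃ p q, actW δ p w ≠ actW δ q w := by
  by_contra! h
  exact hw ⟨actW δ (Classical.arbitrary Q) w, fun p => h p _⟩

theorem ncard_range_actW_append_lt [Finite Q] {u v : List A} {p q : Q}
    (hpq : actW δ p u ≠ actW δ q u) (h : actW δ (actW δ p u) v = actW δ (actW δ q u) v) :
    (range (actW δ · (u ++ v))).ncard < (range (actW δ · u)).ncard := by
  rw [show (actW δ · (u ++ v)) = (actW δ · v) ∘ (actW δ · u) from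
    funext fun x => actW_append δ x u v, range_comp]
  refine lt_of_le_of_ne (ncard_image_le) fun heq => hpq ?_
  exact (ncard_image_iff (toFinite _)).1 heq (mem_range_self p) (mem_range_self q) h

theorem exists_shorter_merging_word [Fintype Q] {B : Type*} (f : Q → B) {p q : Q} {w : List A}
    (hw : f (actW δ p w) = f (actW δ q w)) (hlong : (Fintype.card Q).choose 2 < w.length) :
    ∃ v : List A, v.length < w.length ∧ f (actW δ p v) = f (actW δ q v) := by
  classical
  set P := fun t => actW δ p (w.take t)
  set R := fun t => actW δ q (w.take t)
  by_cases hdiag : ∃ t < w.length, P t = R t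
  · obtain ⟨t, ht, hPR⟩ := hdiag
    exact ⟨w.take t, by simp [ht], congrArg f hPR⟩
  push Not at hdiag
  have hcut : ∀ t₁ t₂, t₁ < t₂ → t₂ < w.length → s(P t₁, R t₁) = s(P t₂, R t₂) →
      ∃ v : List A, v.length < w.length ∧ f (actW δ p v) = f (actW δ q v) := by
    intro t₁ t₂ h₁₂ h₂ heq
    refine ⟨w.take t₁ ++ w.drop t₂, by simp only [List.length_append, List.length_take, List.length_drop]; omega, ?_⟩
    have hp : actW δ p w = actW δ (P t₂) (w.drop t₂) := by
      rw [← actW_append, List.take_append_drop]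
    have hq : actW δ q w = actW δ (R t₂) (w.drop t₂) := by
      rw [← actW_append, List.take_append_drop]
    rw [actW_append, actW_append]
    change f (actW δ (P t₁) (w.drop t₂)) = f (actW δ (R t₁) (w.drop t₂))
    rcases Sym2.eq_iff.1 heq with ⟨hP, hR⟩ | ⟨hP, hR⟩
    · rw [hP, hR, ← hp, ← hq]
      exact hw
    · rw [hP, hR, ← hp, ← hq]
      exact hw.symm
  let pair : Fin w.length → {z : Sym2 Q // ¬ z.IsDiag} := fun t =>
    ⟨s(P t, R t), by simpa using hdiag t t.2⟩
  obtain ⟨t₁, t₂, hne, hpair⟩ := Fintype.exists_ne_map_eq_of_card_lt pair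
    (by rwa [Fintype.card_fin, Sym2.card_subtype_not_diag])
  have heq : s(P t₁, R t₁) = s(P t₂, R t₂) := congrArg Subtype.val hpair
  rcases lt_or_gt_of_ne (Fin.val_ne_of_ne hne) with h | h
  · exact hcut _ _ h t₂.2 heq
  · exact hcut _ _ h t₁.2 heq.symm

theorem exists_merging_word_length_le [Fintype Q] {B : Type*} (f : Q → B) {p q : Q}
    (w : List A) (hw : f (actW δ p w) = f (actW δ q w)) :
    ∃ v : List A, v.length ≤ (Fintype.card Q).choose 2 ∧ f (actW δ p v) = f (actW δ q v) := by
  by_cases hlong : (Fintype.card Q).choose 2 < w.length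
  · obtain ⟨v, hv, hfv⟩ := exists_shorter_merging_word δ f hw hlong
    exact exists_merging_word_length_le f v hfv
  · exact ⟨w, not_lt.1 hlong, hw⟩
termination_by w.length

theorem exists_append_append_mem_synSet_of_notMem [Fintype Q] [Nonempty Q] (hsync : (SynSet δ).Nonempty)
    {x : List A} (hx : ∀ w ∈ MinWords (SynSet δ), ¬ x <:+: w) (α : List A)
    (hα : α ++ x ∉ SynSet δ) :
    ∃ γ : List A, γ.length ≤ (Fintype.card Q).choose 2 ∧ x ++ γ ++ x ∈ SynSet δ := by
  obtain ⟨p, q, hpq⟩ := exists_actW_ne_of_notMem_synSet δ hα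
  obtain ⟨γ, hγ, hmerge⟩ : ∃ γ : List A, γ.length ≤ (Fintype.card Q).choose 2 ∧
      actW δ (actW δ p (α ++ x)) (γ ++ x) = actW δ (actW δ q (α ++ x)) (γ ++ x) := by
    obtain ⟨r, s, hr⟩ := hsync
    simpa only [actW_append] using exists_merging_word_length_le δ (actW δ · x)
      (p := actW δ p (α ++ x)) (q := actW δ q (α ++ x)) r (by simp only [hr])
  by_cases hreset : α ++ x ++ (γ ++ x) ∈ SynSet δ
  · rcases (synSet_isIdealLang δ).append_mem_or_append_mem hx α (γ ++ x) hreset with h | h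
    · exact absurd h hα
    · exact ⟨γ, hγ, by rwa [List.append_assoc]⟩
  · have hdecr := ncard_range_actW_append_lt δ hpq hmerge
    rw [← List.append_assoc] at hreset
    exact exists_append_append_mem_synSet_of_notMem hsync hx (α ++ x ++ γ) hreset
termination_by (range (actW δ · (α ++ x))).ncard
decreasing_by simpa only [List.append_assoc] using hdecr

end Automaton

theorem stmt0_general {A Q : Type*} [Fintype Q] [Nonempty Q]
    (δ : Q → A → Q) (n : ℕ) (hn : Fintype.card Q = n)
    (hsync : (SynSet δ).Nonempty)
    (ℓ : ℕ) (x : List A) (hx : x.length = ℓ)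
    (hmiss : ∀ w ∈ MinWords (SynSet δ), ¬ x <:+: w) :
    ∃ u ∈ SynSet δ, u.length ≤ n * (n - 1) / 2 + 2 * ℓ := by
  by_cases hreset : x ∈ SynSet δ
  · exact ⟨x, hreset, by omega⟩
  obtain ⟨γ, hγ, hγreset⟩ :=
    exists_append_append_mem_synSet_of_notMem δ hsync hmiss [] (by rwa [List.nil_append])
  refine ⟨x ++ γ ++ x, hγreset, ?_⟩
  rw [hn, Nat.choose_two_right] at hγ
  simp only [List.length_append]
  omega

/-- a synchronizing automaton with `n` states whose set of minimal
reset words misses a factor of length `ℓ` has a reset word of length at most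
`n(n-1)/2 + 2ℓ`. -/
theorem stmt0 {A Q : Type*} [Fintype A] [Fintype Q] [Nonempty Q]
    (hA : 1 < Fintype.card A)
    (δ : Q → A → Q) (n : ℕ) (hn : Fintype.card Q = n)
    (hsync : (SynSet δ).Nonempty)
    (ℓ : ℕ) (x : List A) (hx : x.length = ℓ)
    (hmiss : ∀ w ∈ MinWords (SynSet δ), ¬ x <:+: w) :
    ∃ u ∈ SynSet δ, u.length ≤ n * (n - 1) / 2 + 2 * ℓ :=
  stmt0_general δ n hn hsync ℓ x hx hmiss
end

section
/- Let Σ be a finite alphabet with at least two letters, let 𝒜 be a synchronizing automaton over Σ with n states, and let I = Syn(𝒜). If for some natural number ℓ with 16ℓ ≤ 4‖I‖ + 1 there exists a word x of length ℓ over Σ that is not a factor of any word of 𝓜(I), then 4‖I‖ ≤ (2n−1)²; equivalently, the shortest reset word of 𝒜 has length at most (n − 1/2)², i.e. ‖I‖ ≤ n(n−1). -/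
/-- `‖I‖`, the minimal length of a word of `I`. -/
noncomputable def normL {A : Type*} (I : Set (List A)) : ℕ :=
  sInf {k | ∃ u ∈ I, u.length = k}

/-!
Append to `x` words `e ++ x`, each `e` of length at most `C(n, 2)` merging two states of the
current image `Q · γ`, until `γ = x e₁ x e₂ x ⋯ eₖ x` is a reset word. Every factor of `γ`
avoiding `x` then has length at most `2ℓ + C(n, 2) - 2`. A minimal reset word inside `γ` avoids
`x`, hence `‖I‖ ≤ 2ℓ + C(n, 2) - 2`, which together with `4ℓ ≤ ‖I‖` gives `‖I‖ ≤ n(n - 1) - 4`.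
-/

namespace Automaton

variable {A Q : Type*} (δ : Q → A → Q)

lemma actW_append (q : Q) (u v : List A) :
    actW δ q (u ++ v) = actW δ (actW δ q u) v := List.foldl_append

/-- `Q · w`, the set of states reachable by reading `w`. -/
def image [Fintype Q] [DecidableEq Q] (w : List A) : Finset Q :=
  Finset.univ.image (actW δ · w)

variable {δ}

lemma card_image_append_lt [Fintype Q] [DecidableEq Q] {γ v : List A} {p q : Q}
    (hpq : actW δ p γ ≠ actW δ q γ)
    (hv : actW δ (actW δ p γ) v = actW δ (actW δ q γ) v) :
    (image δ (γ ++ v)).card < (image δ γ).card := by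
  have himage : image δ (γ ++ v) = (image δ γ).image (actW δ · v) := by
    simp only [image, Finset.image_image, Function.comp_def, actW_append]
  rw [himage]
  refine lt_of_le_of_ne Finset.card_image_le fun hcard => hpq ?_
  exact Finset.card_image_iff.mp hcard (by simp [image]) (by simp [image]) hv

lemma merges_take_append_drop {e : List A} {i j : ℕ} {p q : Q}
    (he : actW δ p e = actW δ q e)
    (hij : s(actW δ p (e.take i), actW δ q (e.take i)) =
      s(actW δ p (e.take j), actW δ q (e.take j))) :
    actW δ p (e.take i ++ e.drop j) = actW δ q (e.take i ++ e.drop j) := by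
  have hsplit : ∀ r, actW δ r e = actW δ (actW δ r (e.take j)) (e.drop j) := fun r => by
    rw [← actW_append, List.take_append_drop]
  rw [actW_append, actW_append]
  rcases Sym2.eq_iff.mp hij with ⟨hp, hq⟩ | ⟨hp, hq⟩
  · rw [hp, hq, ← hsplit, ← hsplit, he]
  · rw [hp, hq, ← hsplit, ← hsplit, he]

/-- A shortest word merging two states visits distinct unordered pairs of distinct states. -/
theorem exists_merging_word_length_le_choose_two [Fintype Q] {p q : Q}
    (h : ∃ e : List A, actW δ p e = actW δ q e) :
    ∃ e : List A, actW δ p e = actW δ q e ∧ e.length ≤ (Fintype.card Q).choose 2 := by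
  classical
  have hex : ∃ k, ∃ e : List A, e.length = k ∧ actW δ p e = actW δ q e :=
    let ⟨e, he⟩ := h; ⟨_, e, rfl, he⟩
  obtain ⟨e, hlen, he⟩ := Nat.find_spec hex
  have hshort : ∀ e' : List A, e'.length < e.length → actW δ p e' ≠ actW δ q e' :=
    fun e' hlt he' => Nat.find_min hex (hlen ▸ hlt) ⟨e', rfl, he'⟩
  let pair : Fin e.length → {z : Sym2 Q // ¬ z.IsDiag} := fun t =>
    ⟨s(actW δ p (e.take t), actW δ q (e.take t)), by
      rw [Sym2.mk_isDiag_iff]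
      exact hshort _ (by simp)⟩
  have hle : ∀ i j, pair i = pair j → j ≤ i := by
    intro i j hij
    by_contra! hlt
    refine hshort _ ?_ (merges_take_append_drop he (congrArg Subtype.val hij))
    simp only [List.length_append, List.length_take, List.length_drop]
    omega
  have hinj : Function.Injective pair := fun i j hij =>
    le_antisymm (hle j i hij.symm) (hle i j hij)
  refine ⟨e, he, ?_⟩
  simpa only [Fintype.card_fin, Sym2.card_subtype_not_diag] using
    Fintype.card_le_of_injective pair hinj

end Automaton

namespace List

variable {α : Type*}

def FreeFactorsLE (x γ : List α) (K : ℕ) : Prop :=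
  ∀ g, g <:+: γ → ¬ x <:+: g → g.length ≤ K

lemma length_lt_of_infix_of_not_infix {g w x : List α} (hg : g <:+: w) (hx : x <:+: w)
    (hgx : ¬ x <:+: g) : g.length < w.length :=
  lt_of_le_of_ne hg.length_le fun h => hgx (hg.eq_of_length h ▸ hx)

lemma freeFactorsLE_self {x : List α} {K : ℕ} (hK : x.length ≤ K + 1) : FreeFactorsLE x x K :=
  fun _ hg hgx => by have := length_lt_of_infix_of_not_infix hg infix_rfl hgx; omega

/-- A new `x`-free factor is a suffix of `γ` shorter than `x` followed by a proper prefix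
of `y ++ x`. -/
lemma FreeFactorsLE.append {x γ y : List α} {K : ℕ} (hγ : FreeFactorsLE x γ K) (hxγ : x <:+ γ)
    (hK : 2 * x.length + y.length ≤ K + 2) : FreeFactorsLE x (γ ++ (y ++ x)) K := by
  intro g hg hgx
  have hxy : x <:+: y ++ x := infix_append_right
  rcases infix_append_iff.mp hg with hg | hg | ⟨s, t, rfl, hs, ht⟩
  · exact hγ g hg hgx
  · have hlt := length_lt_of_infix_of_not_infix hg hxy hgx
    have hxpos : 0 < x.length := length_pos_iff.mpr (by rintro rfl; exact hgx nil_infix)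
    simp only [length_append] at hlt
    omega
  · have hs : s.length < x.length := by
      by_contra! hle
      exact hgx ((suffix_of_suffix_length_le hxγ hs hle).isInfix.trans infix_append_left)
    have ht : t.length < (y ++ x).length :=
      length_lt_of_infix_of_not_infix ht.isInfix hxy fun h => hgx (h.trans infix_append_right)
    simp only [length_append] at ht ⊢
    omega

end List

namespace Automaton

open List

theorem exists_mem_synSet_freeFactorsLE [Fintype Q] [Nonempty Q] {δ : Q → A → Q} {c K : ℕ}
    (hmerge : ∀ p q : Q, ∃ e : List A, actW δ p e = actW δ q e ∧ e.length ≤ c)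
    {x : List A} (hK : 2 * x.length + c ≤ K + 2) (γ : List A) (hxγ : x <:+ γ)
    (hγ : FreeFactorsLE x γ K) : ∃ γ' ∈ SynSet δ, FreeFactorsLE x γ' K := by
  classical
  induction hk : (image δ γ).card using Nat.strong_induction_on generalizing γ with
  | _ k ih =>
  by_cases hsyn : γ ∈ SynSet δ
  · exact ⟨γ, hsyn, hγ⟩
  obtain ⟨p, q, hpq⟩ : ∃ p q : Q, actW δ p γ ≠ actW δ q γ := by
    by_contra! h
    exact hsyn ⟨_, fun p => h p (Classical.arbitrary Q)⟩
  obtain ⟨e, he, hlen⟩ := hmerge (actW δ p γ) (actW δ q γ)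
  have hlt := card_image_append_lt (v := e ++ x) hpq (by simp only [actW_append, he])
  exact ih _ (hk ▸ hlt) (γ ++ (e ++ x)) ((suffix_append e x).trans (suffix_append γ _))
    (hγ.append hxγ (by omega)) rfl

end Automaton

lemma exists_infix_mem_minWords {α : Type*} {I : Set (List α)} {u : List α} (hu : u ∈ I) :
    ∃ g ∈ MinWords I, g <:+: u := by
  obtain ⟨g, ⟨hgu, hgI⟩, hmin⟩ :=
    (InvImage.wf List.length wellFounded_lt).has_min {g | g <:+: u ∧ g ∈ I} ⟨u, List.infix_rfl, hu⟩
  refine ⟨g, ⟨hgI, ?_⟩, hgu⟩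
  rintro (⟨a, v, ha, hv, rfl⟩ | ⟨v, a, hv, ha, rfl⟩)
  · refine hmin v ⟨List.infix_append_right.trans hgu, hv⟩ ?_
    simpa [InvImage] using List.length_pos_iff.mpr ha
  · refine hmin v ⟨List.infix_append_left.trans hgu, hv⟩ ?_
    simpa [InvImage] using List.length_pos_iff.mpr ha

lemma Nat.eight_mul_choose_two_le (n : ℕ) : 8 * n.choose 2 ≤ (2 * n - 1) ^ 2 := by
  rw [Nat.choose_two_right]
  have h := Nat.mul_div_le (n * (n - 1)) 2
  rcases n with _ | k
  · simp
  · have hsq : (2 * (k + 1) - 1) ^ 2 = 4 * ((k + 1) * k) + 1 := by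
      rw [show 2 * (k + 1) - 1 = 2 * k + 1 by omega]; ring
    rw [hsq, Nat.add_sub_cancel] at *
    omega

open Automaton List in
theorem stmt2_general {A Q : Type*} [Fintype Q]
    (δ : Q → A → Q) (n : ℕ) (hn : Fintype.card Q = n)
    (hsync : (SynSet δ).Nonempty)
    (ℓ : ℕ) (hℓ : 16 * ℓ ≤ 4 * normL (SynSet δ) + 1)
    (x : List A) (hx : x.length = ℓ)
    (hmiss : ∀ w ∈ MinWords (SynSet δ), ¬ x <:+: w) :
    4 * normL (SynSet δ) ≤ (2 * n - 1) ^ 2 := by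
  obtain ⟨w, r, hw⟩ := hsync
  have : Nonempty Q := ⟨r⟩
  have hmerge (p q : Q) :=
    exists_merging_word_length_le_choose_two (δ := δ) ⟨w, (hw p).trans (hw q).symm⟩
  obtain ⟨γ, hγ, hγK⟩ := exists_mem_synSet_freeFactorsLE hmerge
    (K := 2 * ℓ + (Fintype.card Q).choose 2 - 2) (by omega) x suffix_rfl
    (freeFactorsLE_self (by omega))
  obtain ⟨g, hg, hgγ⟩ := exists_infix_mem_minWords hγ
  have hnorm : normL (SynSet δ) ≤ g.length := Nat.sInf_le ⟨g, hg.1, rfl⟩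
  have hgK := hγK g hgγ (hmiss g hg)
  have := Nat.eight_mul_choose_two_le n
  subst hn
  omega

/-- if the set of minimal reset words of a synchronizing automaton with
`n` states misses a factor of length `ℓ` with `16ℓ ≤ 4‖I‖ + 1`, where `I = Syn(𝒜)`,
then `4‖I‖ ≤ (2n-1)²`, i.e. the shortest reset word has length at most `(n - 1/2)²`. -/
theorem stmt2 {A Q : Type*} [Fintype A] [Fintype Q] [Nonempty Q]
    (hA : 1 < Fintype.card A)
    (δ : Q → A → Q) (n : ℕ) (hn : Fintype.card Q = n)
    (hsync : (SynSet δ).Nonempty)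
    (ℓ : ℕ) (hℓ : 16 * ℓ ≤ 4 * normL (SynSet δ) + 1)
    (x : List A) (hx : x.length = ℓ)
    (hmiss : ∀ w ∈ MinWords (SynSet δ), ¬ x <:+: w) :
    4 * normL (SynSet δ) ≤ (2 * n - 1) ^ 2 :=
  stmt2_general δ n hn hsync ℓ hℓ x hx hmiss
end

section
/- Let Σ be a finite alphabet, let I ⊆ Σ* be an ideal with ε ∉ I, and let u ∈ I. Then there exists exactly one triple (u', m, v) of words such that u = u'·m·v, m ∈ 𝓜(I), and, writing m = a·z where a is the first letter of m, the word z·v contains no factor belonging to I. (The word m is called the last factor λ(u) of u and z·v its tail τ(u).) -/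
theorem List.IsSuffix.suffix_tail_of_ne {α : Type*} {s t : List α} (h : s <:+ t)
    (hne : s ≠ t) : s <:+ t.tail := by
  cases t with
  | nil => exact absurd (List.suffix_nil.mp h) hne
  | cons a t => exact (List.suffix_cons_iff.mp h).resolve_left hne

theorem List.IsInfix.prefix_of_not_infix_tail {α : Type*} {w s : List α} (h : w <:+: s)
    (ht : ¬ w <:+: s.tail) : w <+: s := by
  cases s with
  | nil => exact List.infix_nil.mp h ▸ List.prefix_refl []
  | cons a t => exact (List.infix_cons_iff.mp h).resolve_right ht

namespace LastFactor

variable {A : Type*} {I : Set (List A)}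

def HasFactorIn (I : Set (List A)) (u : List A) : Prop := ∃ w ∈ I, w <:+: u

theorem HasFactorIn.mono {u u' : List A} (h : HasFactorIn I u) (hu : u <:+: u') :
    HasFactorIn I u' :=
  let ⟨w, hw, hwu⟩ := h
  ⟨w, hw, hwu.trans hu⟩

theorem not_hasFactorIn_nil (hε : [] ∉ I) : ¬ HasFactorIn I [] := by
  rintro ⟨w, hw, hw_nil⟩
  exact hε (List.infix_nil.mp hw_nil ▸ hw)

def IsCritical (I : Set (List A)) (s : List A) : Prop :=
  HasFactorIn I s ∧ ¬ HasFactorIn I s.tail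

theorem exists_isCritical_suffix (hε : [] ∉ I) {u : List A} (hu : HasFactorIn I u) :
    ∃ s, s <:+ u ∧ IsCritical I s := by
  induction u with
  | nil => exact absurd hu (not_hasFactorIn_nil hε)
  | cons a t ih =>
    by_cases ht : HasFactorIn I t
    · obtain ⟨s, hst, hs⟩ := ih ht
      exact ⟨s, hst.trans (List.suffix_cons a t), hs⟩
    · exact ⟨a :: t, List.suffix_refl _, hu, ht⟩

theorem IsCritical.eq_of_suffix {u s₁ s₂ : List A} (hs₁ : IsCritical I s₁)
    (hs₂ : IsCritical I s₂) (h₁ : s₁ <:+ u) (h₂ : s₂ <:+ u) : s₁ = s₂ := by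
  by_contra hne
  rcases List.suffix_or_suffix_of_suffix h₁ h₂ with h | h
  · exact hs₂.2 (hs₁.1.mono (h.suffix_tail_of_ne hne).isInfix)
  · exact hs₁.2 (hs₂.1.mono (h.suffix_tail_of_ne (Ne.symm hne)).isInfix)

theorem IsCritical.prefix_of_infix {s w : List A} (hs : IsCritical I s) (hw : w ∈ I)
    (hws : w <:+: s) : w <+: s :=
  hws.prefix_of_not_infix_tail fun h => hs.2 ⟨w, hw, h⟩

theorem isCritical_append_iff (hε : [] ∉ I) {m v : List A} (hm : m ∈ I) :
    IsCritical I (m ++ v) ↔ ∀ w, w <:+: m.drop 1 ++ v → w ∉ I := by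
  have hm_ne : m ≠ [] := fun h => hε (h ▸ hm)
  rw [IsCritical, List.tail_append_of_ne_nil hm_ne, ← List.drop_one]
  constructor
  · rintro ⟨-, h⟩ w hw hwI
    exact h ⟨w, hwI, hw⟩
  · exact fun h =>
      ⟨⟨m, hm, (List.prefix_append m v).isInfix⟩, fun ⟨w, hwI, hw⟩ => h w hw hwI⟩

theorem exists_mem_minWords_infix {w : List A} (hw : w ∈ I) : ∃ m ∈ MinWords I, m <:+: w := by
  induction hn : w.length using Nat.strong_induction_on generalizing w with
  | _ n ih =>
    by_cases hmin : w ∈ MinWords I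
    · exact ⟨w, hmin, List.infix_refl w⟩
    obtain ⟨x, w', hx, hw', rfl⟩ | ⟨w', x, hw', hx, rfl⟩ := not_and_not_right.mp hmin hw
    · obtain ⟨m, hm, hmw'⟩ :=
        ih w'.length (by simpa [← hn, List.length_pos_iff] using hx) hw' rfl
      exact ⟨m, hm, hmw'.trans (List.suffix_append x w').isInfix⟩
    · obtain ⟨m, hm, hmw'⟩ :=
        ih w'.length (by simpa [← hn, List.length_pos_iff] using hx) hw' rfl
      exact ⟨m, hm, hmw'.trans (List.prefix_append w' x).isInfix⟩

theorem eq_of_prefix_of_mem_minWords {m m' : List A} (hm : m ∈ I) (hm' : m' ∈ MinWords I)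
    (h : m <+: m') : m = m' := by
  obtain ⟨x, rfl⟩ := h
  by_contra hx
  exact hm'.2 (Or.inr ⟨m, x, hm, fun h => hx (by simp [h]), rfl⟩)

theorem eq_of_mem_minWords_of_prefix {m₁ m₂ s : List A} (hm₁ : m₁ ∈ MinWords I)
    (hm₂ : m₂ ∈ MinWords I) (h₁ : m₁ <+: s) (h₂ : m₂ <+: s) : m₁ = m₂ := by
  rcases List.prefix_or_prefix_of_prefix h₁ h₂ with h | h
  · exact eq_of_prefix_of_mem_minWords hm₁.1 hm₂ h
  · exact (eq_of_prefix_of_mem_minWords hm₂.1 hm₁ h).symm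

end LastFactor

open LastFactor in
theorem stmt3_general {A : Type*}
    (I : Set (List A)) (hε : ([] : List A) ∉ I)
    (u : List A) (hu : u ∈ I) :
    ∃! t : List A × List A × List A,
      u = t.1 ++ t.2.1 ++ t.2.2 ∧ t.2.1 ∈ MinWords I ∧
      ∀ w : List A, w <:+: (t.2.1.drop 1 ++ t.2.2) → w ∉ I := by
  obtain ⟨s, ⟨u', rfl⟩, hs⟩ := exists_isCritical_suffix hε ⟨u, hu, List.infix_refl u⟩
  obtain ⟨w, hw, hws⟩ := hs.1
  obtain ⟨m, hm, hmw⟩ := exists_mem_minWords_infix hw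
  obtain ⟨v, rfl⟩ := hs.prefix_of_infix hm.1 (hmw.trans hws)
  refine ⟨(u', m, v),
    ⟨(List.append_assoc _ _ _).symm, hm, (isCritical_append_iff hε hm.1).1 hs⟩, ?_⟩
  rintro ⟨u'', m', v'⟩ ⟨huv, hm', hv'⟩
  rw [List.append_assoc] at huv
  have hs' : m' ++ v' = m ++ v :=
    ((isCritical_append_iff hε hm'.1).2 hv').eq_of_suffix hs ⟨u'', huv.symm⟩
      (List.suffix_append u' _)
  obtain rfl : m' = m :=
    eq_of_mem_minWords_of_prefix hm' hm (hs' ▸ List.prefix_append m' v') (List.prefix_append m v)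
  obtain rfl : v' = v := List.append_cancel_left hs'
  obtain rfl : u'' = u' := List.append_cancel_right huv.symm
  rfl

/-- every `u ∈ I` admits a unique factorization `u = u'·m·v` with
`m ∈ 𝓜(I)` such that, writing `m = a·z` with `a` the first letter of `m`, the word
`z·v` contains no factor belonging to `I`. -/
theorem stmt3 {A : Type*} [Fintype A]
    (I : Set (List A)) (hI : IsIdealLang I) (hε : ([] : List A) ∉ I)
    (u : List A) (hu : u ∈ I) :
    ∃! t : List A × List A × List A,
      u = t.1 ++ t.2.1 ++ t.2.2 ∧ t.2.1 ∈ MinWords I ∧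
      ∀ w : List A, w <:+: (t.2.1.drop 1 ++ t.2.2) → w ∉ I :=
  stmt3_general I hε u hu
end

section
/- Let Σ be a finite alphabet, let I ⊆ Σ* be an ideal with ε ∉ I, let u ∈ I, and let (u', m, v) be the unique triple with u = u'·m·v, m ∈ 𝓜(I), m = a·z (a the first letter of m), such that z·v contains no factor belonging to I. Then z·v is the longest suffix of u that does not belong to I, i.e. z·v = τ(u). -/
/-!
The word `m·v` is a suffix of `u` only one letter longer than `z·v`. Any suffix of `u` longer
than `z·v` therefore has `m·v` as a suffix, so it contains the factor `m ∈ I` and lies in the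
ideal `I`.
-/

theorem IsIdealLang.mem_of_infix {A : Type*} {I : Set (List A)} (hI : IsIdealLang I)
    {w u : List A} (hw : w ∈ I) (hwu : w <:+: u) : u ∈ I := by
  obtain ⟨x, y, rfl⟩ := hwu
  exact hI x w y hw

theorem IsIdealLang.length_lt_of_suffix_notMem {A : Type*} {I : Set (List A)}
    (hI : IsIdealLang I) {m v u s : List A} (hm : m ∈ I) (hmv : m ++ v <:+ u)
    (hs : s <:+ u) (hsI : s ∉ I) : s.length < (m ++ v).length := by
  by_contra! hlen
  have hmvs : m ++ v <:+ s := List.suffix_of_suffix_length_le hmv hs hlen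
  exact hsI (hI.mem_of_infix hm ((List.prefix_append m v).isInfix.trans hmvs.isInfix))

theorem stmt4_general {A : Type*}
    (I : Set (List A)) (hI : IsIdealLang I) (hε : ([] : List A) ∉ I)
    (u : List A)
    (u' mw v : List A) (hfact : u = u' ++ mw ++ v) (hm : mw ∈ MinWords I)
    (hnofac : ∀ w : List A, w <:+: (mw.drop 1 ++ v) → w ∉ I) :
    (mw.drop 1 ++ v) <:+ u ∧ (mw.drop 1 ++ v) ∉ I ∧
      ∀ s : List A, s <:+ u → s ∉ I → s.length ≤ (mw.drop 1 ++ v).length := by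
  have hmI : mw ∈ I := hm.1
  have hmne : mw ≠ [] := by rintro rfl; exact hε hmI
  have hmv : mw ++ v <:+ u := hfact ▸ ⟨u', (List.append_assoc u' mw v).symm⟩
  refine ⟨(List.suffix_append_self_iff.mpr (List.drop_suffix 1 mw)).trans hmv,
    hnofac _ (List.infix_refl _), fun s hs hsI => ?_⟩
  have hlt := hI.length_lt_of_suffix_notMem hmI hmv hs hsI
  have hpos : 0 < mw.length := List.length_pos_iff.mpr hmne
  simp only [List.length_append, List.length_drop] at hlt ⊢
  omega

/-- in the factorization `u = u'·m·v` with `m ∈ 𝓜(I)`, `m = a·z`, and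
`z·v` containing no factor in `I`, the word `z·v` is the longest suffix of `u` not
belonging to `I`, i.e. `z·v = τ(u)`. -/
theorem stmt4 {A : Type*} [Fintype A]
    (I : Set (List A)) (hI : IsIdealLang I) (hε : ([] : List A) ∉ I)
    (u : List A) (hu : u ∈ I)
    (u' mw v : List A) (hfact : u = u' ++ mw ++ v) (hm : mw ∈ MinWords I)
    (hnofac : ∀ w : List A, w <:+: (mw.drop 1 ++ v) → w ∉ I) :
    (mw.drop 1 ++ v) <:+ u ∧ (mw.drop 1 ++ v) ∉ I ∧
      ∀ s : List A, s <:+ u → s ∉ I → s.length ≤ (mw.drop 1 ++ v).length :=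
  stmt4_general I hI hε u u' mw v hfact hm hnofac
end

section
/- Let Σ be a finite alphabet, let I ⊆ Σ* be an ideal with ε ∉ I, let a ∈ Σ and t ∈ Σ* be such that a·t ∈ I and t ∉ I. Then {v ∈ I : ι(v) = a·t} = {w ++ (a·t) : w ∈ Σ*} = Σ*·(a·t). In particular, each class of words of I sharing the same tail structure is a left ideal of the form Σ*·a·t. -/
/-- `τ(u)`: the longest suffix of `u` not belonging to `I`
(the suffix of `u` of length `k` is `u.drop (u.length - k)`). -/
noncomputable def tailW {A : Type*} (I : Set (List A)) (u : List A) : List A :=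
  u.drop (u.length - sSup {k | k ≤ u.length ∧ u.drop (u.length - k) ∉ I})

/-- `ι(u)`: the suffix of `u` of length `|τ(u)| + 1`,
i.e. the shortest suffix of `u` belonging to `I`. -/
noncomputable def iotaW {A : Type*} (I : Set (List A)) (u : List A) : List A :=
  u.drop (u.length - ((tailW I u).length + 1))

/-- `L` is a left ideal: `Σ*·L ⊆ L`. -/
def IsLeftIdeal {A : Type*} (L : Set (List A)) : Prop :=
  ∀ x w : List A, w ∈ L → x ++ w ∈ L

/-!
Every suffix of `x·a·t` longer than `t` has `a·t` as a suffix and so lies in the ideal `I`, while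
`t ∉ I`; hence `τ(x·a·t) = t` and `ι(x·a·t) = a·t`. Conversely, `ι(v)` is a suffix of `v`.
-/

theorem List.drop_length_sub_length_append {α : Type*} (l₁ l₂ : List α) :
    (l₁ ++ l₂).drop ((l₁ ++ l₂).length - l₂.length) = l₂ := by
  rw [List.length_append, Nat.add_sub_cancel, List.drop_left]

theorem IsIdealLang.append_mem {A : Type*} {I : Set (List A)} (hI : IsIdealLang I)
    (x : List A) {u : List A} (hu : u ∈ I) : x ++ u ∈ I := by
  simpa using hI x u [] hu

theorem iotaW_suffix {A : Type*} (I : Set (List A)) (v : List A) : iotaW I v <:+ v :=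
  List.drop_suffix _ v

section Tail

variable {A : Type*} {I : Set (List A)} {a : A} {t : List A}

theorem isGreatest_length_drop_not_mem (hI : IsIdealLang I) (hat : a :: t ∈ I) (ht : t ∉ I)
    (x : List A) :
    IsGreatest {k | k ≤ (x ++ a :: t).length ∧ (x ++ a :: t).drop ((x ++ a :: t).length - k) ∉ I}
      t.length := by
  have hlen : (x ++ a :: t).length = x.length + (t.length + 1) := by simp
  refine ⟨⟨by omega, ?_⟩, fun k ⟨_, hk⟩ => ?_⟩
  · rwa [List.append_cons, List.drop_length_sub_length_append]
  · by_contra! hlt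
    have hle : (x ++ a :: t).length - k ≤ x.length := by omega
    rw [List.drop_append_of_le_length hle] at hk
    exact hk (hI.append_mem _ hat)

theorem tailW_append_cons (hI : IsIdealLang I) (hat : a :: t ∈ I) (ht : t ∉ I) (x : List A) :
    tailW I (x ++ a :: t) = t := by
  rw [tailW, (isGreatest_length_drop_not_mem hI hat ht x).csSup_eq, List.append_cons,
    List.drop_length_sub_length_append]

theorem iotaW_append_cons (hI : IsIdealLang I) (hat : a :: t ∈ I) (ht : t ∉ I) (x : List A) :
    iotaW I (x ++ a :: t) = a :: t := by
  rw [iotaW, tailW_append_cons hI hat ht, ← List.length_cons (a := a),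
    List.drop_length_sub_length_append]

theorem setOf_mem_and_iotaW_eq (hI : IsIdealLang I) (hat : a :: t ∈ I) (ht : t ∉ I) :
    {v | v ∈ I ∧ iotaW I v = a :: t} = {w | ∃ x : List A, w = x ++ (a :: t)} := by
  ext v
  constructor
  · rintro ⟨-, hv⟩
    obtain ⟨x, hx⟩ := hv ▸ iotaW_suffix I v
    exact ⟨x, hx.symm⟩
  · rintro ⟨x, rfl⟩
    exact ⟨hI.append_mem x hat, iotaW_append_cons hI hat ht x⟩

end Tail

theorem isLeftIdeal_setOf_exists_append {A : Type*} (u : List A) :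
    IsLeftIdeal {w | ∃ x : List A, w = x ++ u} := by
  rintro y _ ⟨x, rfl⟩
  exact ⟨y ++ x, (List.append_assoc y x u).symm⟩

theorem stmt6_general {A : Type*}
    (I : Set (List A)) (hI : IsIdealLang I)
    (a : A) (t : List A) (hat : a :: t ∈ I) (ht : t ∉ I) :
    {v | v ∈ I ∧ iotaW I v = a :: t} = {w | ∃ x : List A, w = x ++ (a :: t)} ∧
    IsLeftIdeal {v | v ∈ I ∧ iotaW I v = a :: t} := by
  rw [setOf_mem_and_iotaW_eq hI hat ht]
  exact ⟨rfl, isLeftIdeal_setOf_exists_append _⟩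

/-- for `a·t ∈ I` with `t ∉ I`, the class of words of `I` whose shortest
suffix in `I` is `a·t` equals `Σ*·(a·t)`; in particular it is a left ideal. -/
theorem stmt6 {A : Type*} [Fintype A]
    (I : Set (List A)) (hI : IsIdealLang I) (hε : ([] : List A) ∉ I)
    (a : A) (t : List A) (hat : a :: t ∈ I) (ht : t ∉ I) :
    {v | v ∈ I ∧ iotaW I v = a :: t} = {w | ∃ x : List A, w = x ++ (a :: t)} ∧
    IsLeftIdeal {v | v ∈ I ∧ iotaW I v = a :: t} :=
  stmt6_general I hI a t hat ht
end

section
/- Let Σ be a finite alphabet, let I ⊆ Σ* be an ideal with ε ∉ I, and let u ∈ I. If s is a suffix of u with |s| > |ι(u)| (i.e. s strictly longer than the shortest suffix of u belonging to I), then no word of 𝓜(I) has s as a prefix, i.e. the left quotient s⁻¹𝓜(I) = {w : s·w ∈ 𝓜(I)} is empty. -/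
/-- The left quotient `s⁻¹L = {w : s·w ∈ L}`. -/
def lquot {A : Type*} (L : Set (List A)) (s : List A) : Set (List A) := {w | s ++ w ∈ L}

/-!
`ι(u) ∈ I` is a suffix of `u` shorter than `s`, hence `s = x · ι(u)` with `x ≠ ε`; for every `w`,
`ι(u) · w ∈ I` because `I` is an ideal, so `s · w ∈ Σ⁺I` is not minimal.
-/

section MinimalWords

variable {A : Type*} {I : Set (List A)}

theorem lquot_minWords_eq_empty_of_mem_of_suffix (hI : IsIdealLang I) {v s : List A}
    (hv : v ∈ I) (hvs : v <:+ s) (hlt : v.length < s.length) :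
    lquot (MinWords I) s = ∅ := by
  obtain ⟨x, rfl⟩ := hvs
  have hx : x ≠ [] := by
    rintro rfl
    exact hlt.ne rfl
  refine Set.eq_empty_of_forall_notMem fun w hw => hw.2 (Or.inl ⟨x, v ++ w, hx, ?_, ?_⟩)
  · simpa using hI [] v w hv
  · simp

variable (I) in
/-- When `τ(u) = u`, the truncated subtraction in `iotaW` makes `ι(u) = u`. -/
theorem iotaW_mem_or_eq_self (u : List A) : iotaW I u ∈ I ∨ iotaW I u = u := by
  set S : Set ℕ := {k | k ≤ u.length ∧ u.drop (u.length - k) ∉ I} with hS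
  have hbdd : BddAbove S := ⟨u.length, fun _ hk => hk.1⟩
  have hSle : sSup S ≤ u.length := csSup_le' fun _ hk => hk.1
  have htail : (tailW I u).length = sSup S := by
    simp only [tailW, ← hS, List.length_drop]
    omega
  rcases hSle.lt_or_eq with hlt | heq
  · left
    rw [iotaW, htail]
    by_contra h
    exact (le_csSup hbdd ⟨hlt, h⟩).not_gt (Nat.lt_succ_self _)
  · right
    rw [iotaW, htail, heq]
    simp

end MinimalWords

theorem stmt7_general {A : Type*}
    (I : Set (List A)) (hI : IsIdealLang I)
    (u : List A)
    (s : List A) (hs : s <:+ u) (hlen : (iotaW I u).length < s.length) :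
    lquot (MinWords I) s = ∅ := by
  rcases iotaW_mem_or_eq_self I u with hmem | heq
  · exact lquot_minWords_eq_empty_of_mem_of_suffix hI hmem
      (List.suffix_of_suffix_length_le (List.drop_suffix _ _) hs hlen.le) hlen
  · exact absurd hlen (heq ▸ hs.length_le).not_gt

/-- if `s` is a suffix of `u ∈ I` strictly longer than `ι(u)`, then no
word of `𝓜(I)` has `s` as a prefix, i.e. `s⁻¹𝓜(I) = ∅`. -/
theorem stmt7 {A : Type*} [Fintype A]
    (I : Set (List A)) (hI : IsIdealLang I) (hε : ([] : List A) ∉ I)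
    (u : List A) (hu : u ∈ I)
    (s : List A) (hs : s <:+ u) (hlen : (iotaW I u).length < s.length) :
    lquot (MinWords I) s = ∅ :=
  stmt7_general I hI u s hs hlen
end

section
/- Let Σ be a finite alphabet, let I ⊆ Σ* be an ideal with ε ∉ I, and let u ∈ I. Then u has a suffix belonging to 𝓜(I) if and only if ι(u) ∈ 𝓜(I) (where ι(u) is the shortest suffix of u belonging to I); moreover u has at most one suffix belonging to 𝓜(I), and when it exists it equals ι(u). -/
def nonMemSuffixLengths {A : Type*} (I : Set (List A)) (u : List A) : Set ℕ :=
  {k | k ≤ u.length ∧ u.drop (u.length - k) ∉ I}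

section Suffixes

variable {A : Type*} {I : Set (List A)} {s t u : List A}

theorem IsIdealLang.mem_of_isSuffix (hI : IsIdealLang I) (hst : s <:+ t) (hs : s ∈ I) :
    t ∈ I := by
  obtain ⟨x, rfl⟩ := hst
  simpa using hI x s [] hs

theorem eq_of_isSuffix_of_mem_minWords (hs : s ∈ MinWords I) (ht : t ∈ I) (hts : t <:+ s) :
    t = s := by
  obtain ⟨x, rfl⟩ := hts
  rcases eq_or_ne x [] with rfl | hx
  · rfl
  · exact absurd (Or.inl ⟨x, t, hx, ht, rfl⟩) hs.2

theorem tailW_isSuffix : tailW I u <:+ u := List.drop_suffix _ _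

theorem iotaW_isSuffix : iotaW I u <:+ u := List.drop_suffix _ _

theorem sSup_nonMemSuffixLengths_mem (hε : ([] : List A) ∉ I) :
    sSup (nonMemSuffixLengths I u) ∈ nonMemSuffixLengths I u :=
  Nat.sSup_mem ⟨0, Nat.zero_le _, by simpa using hε⟩ ⟨u.length, fun _ hk => hk.1⟩

theorem tailW_not_mem (hε : ([] : List A) ∉ I) : tailW I u ∉ I :=
  (sSup_nonMemSuffixLengths_mem hε).2

theorem length_tailW (hε : ([] : List A) ∉ I) :
    (tailW I u).length = sSup (nonMemSuffixLengths I u) := by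
  have := (sSup_nonMemSuffixLengths_mem (u := u) hε).1
  rw [tailW, List.length_drop]
  exact Nat.sub_sub_self this

theorem length_tailW_lt_of_isSuffix_of_mem (hI : IsIdealLang I) (hε : ([] : List A) ∉ I)
    (hsu : s <:+ u) (hs : s ∈ I) : (tailW I u).length < s.length := by
  by_contra! h
  exact tailW_not_mem hε <|
    hI.mem_of_isSuffix (List.suffix_of_suffix_length_le hsu tailW_isSuffix h) hs

theorem length_iotaW (hε : ([] : List A) ∉ I) (hu : u ∈ I) :
    (iotaW I u).length = (tailW I u).length + 1 := by
  have hlt : (tailW I u).length < u.length :=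
    lt_of_le_of_ne tailW_isSuffix.length_le fun h =>
      tailW_not_mem hε (tailW_isSuffix.eq_of_length h ▸ hu)
  rw [iotaW, List.length_drop]
  omega

theorem iotaW_mem (hε : ([] : List A) ∉ I) (hu : u ∈ I) : iotaW I u ∈ I := by
  by_contra h
  have hmem : (iotaW I u).length ∈ nonMemSuffixLengths I u :=
    ⟨iotaW_isSuffix.length_le, by rwa [length_iotaW hε hu, ← iotaW]⟩
  have := le_csSup ⟨u.length, fun _ hk => hk.1⟩ hmem
  rw [length_iotaW hε hu, length_tailW hε] at this
  omega

theorem iotaW_isSuffix_of_mem (hI : IsIdealLang I) (hε : ([] : List A) ∉ I) (hu : u ∈ I)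
    (hsu : s <:+ u) (hs : s ∈ I) : iotaW I u <:+ s :=
  List.suffix_of_suffix_length_le iotaW_isSuffix hsu <| by
    rw [length_iotaW hε hu]
    exact length_tailW_lt_of_isSuffix_of_mem hI hε hsu hs

end Suffixes

theorem stmt8_general {A : Type*}
    (I : Set (List A)) (hI : IsIdealLang I) (hε : ([] : List A) ∉ I)
    (u : List A) (hu : u ∈ I) :
    ((∃ s : List A, s <:+ u ∧ s ∈ MinWords I) ↔ iotaW I u ∈ MinWords I) ∧
    ∀ s : List A, s <:+ u → s ∈ MinWords I → s = iotaW I u := by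
  have unique : ∀ s : List A, s <:+ u → s ∈ MinWords I → s = iotaW I u := fun s hsu hs =>
    (eq_of_isSuffix_of_mem_minWords hs (iotaW_mem hε hu)
      (iotaW_isSuffix_of_mem hI hε hu hsu hs.1)).symm
  exact ⟨⟨fun ⟨s, hsu, hs⟩ => unique s hsu hs ▸ hs, fun h => ⟨_, iotaW_isSuffix, h⟩⟩, unique⟩

/-- `u ∈ I` has a suffix in `𝓜(I)` iff `ι(u) ∈ 𝓜(I)`; moreover `u` has
at most one suffix in `𝓜(I)`, and when it exists it equals `ι(u)`. -/
theorem stmt8 {A : Type*} [Fintype A]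
    (I : Set (List A)) (hI : IsIdealLang I) (hε : ([] : List A) ∉ I)
    (u : List A) (hu : u ∈ I) :
    ((∃ s : List A, s <:+ u ∧ s ∈ MinWords I) ↔ iotaW I u ∈ MinWords I) ∧
    ∀ s : List A, s <:+ u → s ∈ MinWords I → s = iotaW I u :=
  stmt8_general I hI hε u hu
end

section
/- Let Σ be a finite alphabet and let I ⊆ Σ* be a nonempty ideal with ε ∉ I. Then the set of all tails of elements of I satisfies {τ(u) : u ∈ I} = ⋃_{a ∈ Σ} ((a⁻¹𝓜(I))·Σ* \ I), where a⁻¹𝓜(I) = {z : a·z ∈ 𝓜(I)} is the left quotient of 𝓜(I) by the letter a. -/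
/-! The tail of `u ∈ I` is the word `t` in the factorisation `u = s · a · t` with `a · t ∈ I`
and `t ∉ I`: all longer suffixes contain `a · t` and lie in the ideal. Conversely such a `t` is the
tail of `a · t` itself. Finally, `a · t ∈ I` with `t ∉ I` holds exactly when `t` extends a word `z`
with `a · z` minimal: the shortest prefix of `a · t` in `I` is such a word, since a proper suffix of
it in `I` would put `t` in `I`. -/

theorem exists_eq_append_cons_of_mem {A : Type*} {I : Set (List A)} (hε : ([] : List A) ∉ I)
    {u : List A} (hu : u ∈ I) : ∃ s a t, u = s ++ a :: t ∧ a :: t ∈ I ∧ t ∉ I := by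
  induction u with
  | nil => exact absurd hu hε
  | cons b u ih =>
    by_cases h : u ∈ I
    · obtain ⟨s, a, t, rfl, hat, ht⟩ := ih h
      exact ⟨b :: s, a, t, rfl, hat, ht⟩
    · exact ⟨[], b, u, rfl, hu, h⟩

theorem exists_shortest_prefix_mem {A : Type*} {I : Set (List A)} {w : List A} (hw : w ∈ I) :
    ∃ p v, w = p ++ v ∧ p ∈ I ∧ ∀ q r, r ≠ [] → p = q ++ r → q ∉ I := by
  classical
  have h : ∃ n, w.take n ∈ I := ⟨w.length, by rwa [List.take_length]⟩
  refine ⟨w.take (Nat.find h), w.drop (Nat.find h), (List.take_append_drop _ _).symm,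
    Nat.find_spec h, fun q r hr hqr hq => ?_⟩
  have hlt : q.length < Nat.find h := by
    have hr' := List.length_pos_of_ne_nil hr
    have := congrArg List.length hqr
    simp only [List.length_take, List.length_append] at this
    omega
  have hq' : w.take q.length = q := by
    rw [← min_eq_left hlt.le, ← List.take_take, hqr, List.take_left]
  exact Nat.find_min h hlt (by rwa [hq'])

namespace IsIdealLang

variable {A : Type*} {I : Set (List A)}

theorem append_mem_left_s9 (hI : IsIdealLang I) {u : List A} (hu : u ∈ I) (x : List A) :
    x ++ u ∈ I := by
  simpa using hI x u [] hu

theorem append_mem_right_s9 (hI : IsIdealLang I) {u : List A} (hu : u ∈ I) (y : List A) :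
    u ++ y ∈ I :=
  hI [] u y hu

theorem tailW_append_cons (hI : IsIdealLang I) {t : List A} (ht : t ∉ I) {a : A}
    (hat : a :: t ∈ I) (s : List A) : tailW I (s ++ a :: t) = t := by
  have hlen : (s ++ a :: t).length = s.length + 1 + t.length := by simp; omega
  have hdrop : (s ++ a :: t).drop (s.length + 1) = t := by simp [List.drop_append]
  have hsup : sSup {k | k ≤ (s ++ a :: t).length ∧
      (s ++ a :: t).drop ((s ++ a :: t).length - k) ∉ I} = t.length := by
    refine IsGreatest.csSup_eq ⟨⟨by omega, by rwa [hlen, Nat.sub_eq_of_eq_add rfl, hdrop]⟩, ?_⟩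
    rintro k ⟨hk, hkI⟩
    by_contra! hlt
    refine hkI ?_
    rw [List.drop_append_of_le_length (by omega)]
    exact hI.append_mem_left_s9 hat _
  rw [tailW, hsup, hlen, Nat.sub_eq_of_eq_add rfl, hdrop]

theorem exists_cons_mem_minWords (hI : IsIdealLang I) {a : A} {t : List A} (hat : a :: t ∈ I)
    (ht : t ∉ I) : ∃ z v, a :: z ∈ MinWords I ∧ t = z ++ v := by
  obtain ⟨p, v, hpv, hp, hshort⟩ := exists_shortest_prefix_mem hat
  cases p with
  | nil => exact absurd (by simpa using hI.append_mem_left_s9 hp t) ht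
  | cons b z =>
    obtain ⟨rfl, rfl⟩ : a = b ∧ t = z ++ v := by simpa using hpv
    refine ⟨z, v, ⟨hp, ?_⟩, rfl⟩
    rintro (⟨x, w, hx, hw, hxw⟩ | ⟨w, x, hw, hx, hwx⟩)
    · obtain ⟨c, x, rfl⟩ := List.exists_cons_of_ne_nil hx
      obtain ⟨-, rfl⟩ : a = c ∧ z = x ++ w := by simpa using hxw
      exact ht (by simpa using hI x w v hw)
    · exact hshort w x hx hwx hw

end IsIdealLang

theorem stmt9_general {A : Type*}
    (I : Set (List A)) (hI : IsIdealLang I) (hε : ([] : List A) ∉ I) :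
    {t | ∃ u ∈ I, tailW I u = t} =
      ⋃ a : A, ({w | ∃ z v : List A, a :: z ∈ MinWords I ∧ w = z ++ v} \ I) := by
  ext t
  simp only [Set.mem_ofPred_eq, Set.mem_iUnion, Set.mem_sdiff]
  constructor
  · rintro ⟨u, hu, rfl⟩
    obtain ⟨s, a, t, rfl, hat, ht⟩ := exists_eq_append_cons_of_mem hε hu
    rw [hI.tailW_append_cons ht hat]
    exact ⟨a, hI.exists_cons_mem_minWords hat ht, ht⟩
  · rintro ⟨a, ⟨z, v, hz, rfl⟩, ht⟩
    have hat : a :: (z ++ v) ∈ I := hI.append_mem_right_s9 hz.1 v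
    exact ⟨a :: (z ++ v), hat, hI.tailW_append_cons ht hat []⟩

/-- the set of all tails of elements of a nonempty ideal `I` (with
`ε ∉ I`) equals `⋃_{a ∈ Σ} ((a⁻¹𝓜(I))·Σ* \ I)`. -/
theorem stmt9 {A : Type*} [Fintype A]
    (I : Set (List A)) (hI : IsIdealLang I) (hε : ([] : List A) ∉ I)
    (hne : I.Nonempty) :
    {t | ∃ u ∈ I, tailW I u = t} =
      ⋃ a : A, ({w | ∃ z v : List A, a :: z ∈ MinWords I ∧ w = z ++ v} \ I) :=
  stmt9_general I hI hε
end

section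
/- Let Σ be a finite alphabet, let I ⊆ Σ* be an ideal, and let 𝓘 be a nonempty reset left decomposition of I. Then for every J ∈ 𝓘 and a ∈ Σ there is a unique J' ∈ 𝓘 with J·a ⊆ J', so that 𝒜(𝓘) = (𝓘, δ) with δ(J, a) = this unique J' is a well-defined automaton; moreover 𝒜(𝓘) is strongly connected, synchronizing, and Syn(𝒜(𝓘)) = I. -/
/-- A reset left decomposition of an ideal `I`: a collection of pairwise disjoint
nonempty left ideals whose union is `I`, such that (i) for every letter `a` and
every member `J` there is a member `J'` with `J·a ⊆ J'`, and (ii) for every word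
`u`, if `I·u ⊆ J` for some member `J` then `u ∈ I`. -/
def IsResetLeftDecomp {A : Type*} (I : Set (List A)) (F : Set (Set (List A))) : Prop :=
  (∀ J ∈ F, J.Nonempty) ∧
  (∀ J ∈ F, IsLeftIdeal J) ∧
  (F.PairwiseDisjoint id) ∧
  (⋃₀ F = I) ∧
  (∀ a : A, ∀ J ∈ F, ∃ J' ∈ F, ∀ w ∈ J, w ++ [a] ∈ J') ∧
  (∀ u : List A, (∃ J ∈ F, ∀ v ∈ I, v ++ u ∈ J) → u ∈ I)

/- Because the members of `𝓘` are disjoint left ideals, a word `w ++ u` lies in exactly one of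
them, and that member is reached from the member containing `w` by reading `u`. Hence from
any state, reading a word `u ∈ J` leads to `J`, which gives strong connectivity and makes every
word of `I` a reset word; conversely, a reset word `u` sends all of `I` into one member via
`v ↦ v ++ u`, so `u ∈ I` by the reset condition (ii). -/

theorem mem_actW_of_forall_mem {A Q : Type*} {δ : Q → A → Q} (L : Q → Set (List A))
    (hδ : ∀ q a, ∀ w ∈ L q, w ++ [a] ∈ L (δ q a)) :
    ∀ (u : List A) {q : Q} {w : List A}, w ∈ L q → w ++ u ∈ L (actW δ q u)
  | [], _, _, hw => by simpa [actW] using hw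
  | a :: u, _, w, hw => by
    simpa [actW] using mem_actW_of_forall_mem L hδ u (hδ _ a w hw)

namespace IsResetLeftDecomp

variable {A : Type*} {I : Set (List A)} {F : Set (Set (List A))}

theorem nonempty (hF : IsResetLeftDecomp I F) {J : Set (List A)} (hJ : J ∈ F) : J.Nonempty :=
  hF.1 J hJ

theorem isLeftIdeal (hF : IsResetLeftDecomp I F) {J : Set (List A)} (hJ : J ∈ F) :
    IsLeftIdeal J :=
  hF.2.1 J hJ

theorem pairwiseDisjoint (hF : IsResetLeftDecomp I F) : F.PairwiseDisjoint id :=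
  hF.2.2.1

theorem sUnion_eq (hF : IsResetLeftDecomp I F) : ⋃₀ F = I :=
  hF.2.2.2.1

theorem exists_step (hF : IsResetLeftDecomp I F) (a : A) {J : Set (List A)} (hJ : J ∈ F) :
    ∃ J' ∈ F, ∀ w ∈ J, w ++ [a] ∈ J' :=
  hF.2.2.2.2.1 a J hJ

theorem mem_of_forall_append_mem (hF : IsResetLeftDecomp I F) {u : List A}
    {J : Set (List A)} (hJ : J ∈ F) (hu : ∀ v ∈ I, v ++ u ∈ J) : u ∈ I :=
  hF.2.2.2.2.2 u ⟨J, hJ, hu⟩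

theorem eq_of_mem (hF : IsResetLeftDecomp I F) {J₁ J₂ : Set (List A)} (h₁ : J₁ ∈ F)
    (h₂ : J₂ ∈ F) {w : List A} (hw₁ : w ∈ J₁) (hw₂ : w ∈ J₂) : J₁ = J₂ :=
  hF.pairwiseDisjoint.elim_set h₁ h₂ w hw₁ hw₂

theorem existsUnique_step (hF : IsResetLeftDecomp I F) {J : Set (List A)} (hJ : J ∈ F)
    (a : A) : ∃! J' : Set (List A), J' ∈ F ∧ ∀ w ∈ J, w ++ [a] ∈ J' := by
  obtain ⟨J', hJ', hsub⟩ := hF.exists_step a hJ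
  refine ⟨J', ⟨hJ', hsub⟩, fun J'' ⟨hJ'', hsub''⟩ => ?_⟩
  obtain ⟨w, hw⟩ := hF.nonempty hJ
  exact hF.eq_of_mem hJ'' hJ' (hsub'' w hw) (hsub w hw)

/-- The transition function of the automaton `𝒜(𝓘)`. -/
noncomputable def delta (hF : IsResetLeftDecomp I F) (J : F) (a : A) : F :=
  ⟨_, (hF.exists_step a J.2).choose_spec.1⟩

theorem append_mem_delta (hF : IsResetLeftDecomp I F) (J : F) (a : A) :
    ∀ w ∈ (J : Set (List A)), w ++ [a] ∈ (hF.delta J a : Set (List A)) :=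
  (hF.exists_step a J.2).choose_spec.2

theorem append_mem_actW_delta (hF : IsResetLeftDecomp I F) {p : F} {w : List A}
    (hw : w ∈ (p : Set (List A))) (u : List A) :
    w ++ u ∈ ((actW hF.delta p u : F) : Set (List A)) :=
  mem_actW_of_forall_mem Subtype.val hF.append_mem_delta u hw

theorem actW_delta_of_mem (hF : IsResetLeftDecomp I F) (p : F) {u : List A} {J : F}
    (hu : u ∈ (J : Set (List A))) : actW hF.delta p u = J := by
  obtain ⟨w, hw⟩ := hF.nonempty p.2
  exact Subtype.ext <| hF.eq_of_mem (actW hF.delta p u).2 J.2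
    (hF.append_mem_actW_delta hw u) (hF.isLeftIdeal J.2 w u hu)

theorem synSet_delta (hF : IsResetLeftDecomp I F) : SynSet hF.delta = I := by
  ext u
  constructor
  · rintro ⟨q, hq⟩
    refine hF.mem_of_forall_append_mem q.2 fun v hv => ?_
    obtain ⟨J, hJ, hvJ⟩ := hF.sUnion_eq ▸ hv
    simpa [hq ⟨J, hJ⟩] using hF.append_mem_actW_delta (p := ⟨J, hJ⟩) hvJ u
  · intro hu
    obtain ⟨J, hJ, huJ⟩ := hF.sUnion_eq.symm ▸ hu
    exact ⟨⟨J, hJ⟩, fun p => hF.actW_delta_of_mem p (J := ⟨J, hJ⟩) huJ⟩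

end IsResetLeftDecomp

theorem stmt13_general {A : Type*}
    (I : Set (List A))
    (F : Set (Set (List A))) (hF : IsResetLeftDecomp I F) :
    (∀ J ∈ F, ∀ a : A, ∃! J' : Set (List A), J' ∈ F ∧ ∀ w ∈ J, w ++ [a] ∈ J') ∧
    ∃ δ : F → A → F,
      (∀ (J : F) (a : A), ∀ w ∈ (J : Set (List A)), w ++ [a] ∈ (δ J a : Set (List A))) ∧
      (∀ p q : F, ∃ w : List A, actW δ p w = q) ∧
      SynSet δ = I := by
  refine ⟨fun J hJ a => hF.existsUnique_step hJ a, hF.delta, hF.append_mem_delta,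
    fun p q => ?_, hF.synSet_delta⟩
  obtain ⟨u, hu⟩ := hF.nonempty q.2
  exact ⟨u, hF.actW_delta_of_mem p hu⟩

/-- for a nonempty reset left decomposition `𝓘` of an ideal `I`, each
`J ∈ 𝓘` and `a ∈ Σ` determine a unique `J' ∈ 𝓘` with `J·a ⊆ J'`; the resulting
automaton on `𝓘` is strongly connected, synchronizing, and its set of reset words
is exactly `I`. -/
theorem stmt13 {A : Type*} [Fintype A]
    (I : Set (List A)) (hI : IsIdealLang I)
    (F : Set (Set (List A))) (hF : IsResetLeftDecomp I F) (hne : F.Nonempty) :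
    (∀ J ∈ F, ∀ a : A, ∃! J' : Set (List A), J' ∈ F ∧ ∀ w ∈ J, w ++ [a] ∈ J') ∧
    ∃ δ : F → A → F,
      (∀ (J : F) (a : A), ∀ w ∈ (J : Set (List A)), w ++ [a] ∈ (δ J a : Set (List A))) ∧
      (∀ p q : F, ∃ w : List A, actW δ p w = q) ∧
      SynSet δ = I :=
  stmt13_general I F hF
end

section
/- Let Σ be a finite alphabet with at least two letters and let I ⊆ Σ* be any nonempty ideal (not necessarily regular) with ε ∉ I. Then there exists a strongly connected synchronizing automaton 𝒜 (with a possibly countably infinite set of states) over Σ such that Syn(𝒜) = I. -/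
/-!
Take as states the words of `I` none of whose proper suffixes lies in `I`, and let a letter act by
appending it and cutting the result down to its shortest suffix in `I`. Then a word `w` sends a
state `q` to the shortest suffix of `q ++ w` in `I`. If `w ∈ I` this is the shortest suffix of `w`
itself, whatever `q` is: so `w` is a reset word, and reading the state `q` from any state leads
to `q`. If `w ∉ I`, the suffix `c :: w` of `q ++ c :: w` survives the cut, its tail not being
in `I`; so reading `a :: w` and `b :: w` with `a ≠ b` from the same state ends in different
states, and hence `w` is not a reset word.
-/

theorem List.eq_of_cons_suffix_of_cons_suffix {α : Type*} {a b : α} {w z : List α}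
    (ha : a :: w <:+ z) (hb : b :: w <:+ z) : a = b :=
  List.head_eq_of_cons_eq <|
    (List.suffix_of_suffix_length_le ha hb le_rfl).eq_of_length (by simp)

namespace IsIdealLang

variable {A : Type} {I : Set (List A)}

theorem append_left_mem (hI : IsIdealLang I) {u : List A} (x : List A) (hu : u ∈ I) :
    x ++ u ∈ I := by
  simpa using hI x u [] hu

theorem append_right_mem (hI : IsIdealLang I) {u : List A} (x : List A) (hu : u ∈ I) :
    u ++ x ∈ I := by
  simpa using hI [] u x hu

end IsIdealLang

section ShortestSuffix

variable {A : Type} {I : Set (List A)}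

open Classical in
/-- For an ideal `I`, this is the shortest suffix of `h` lying in `I`, and `h` itself if there is
none. -/
noncomputable def shortestSuffix (I : Set (List A)) : List A → List A
  | [] => []
  | c :: h => if h ∈ I then shortestSuffix I h else c :: h

variable (I) in
theorem shortestSuffix_suffix (h : List A) : shortestSuffix I h <:+ h := by
  induction h with
  | nil => simp [shortestSuffix]
  | cons c h ih =>
    rw [shortestSuffix]
    split
    · exact ih.trans (List.suffix_cons c h)
    · exact List.suffix_rfl

theorem tail_shortestSuffix_notMem (hε : ([] : List A) ∉ I) (h : List A) :
    (shortestSuffix I h).tail ∉ I := by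
  induction h with
  | nil => simpa [shortestSuffix] using hε
  | cons c h ih =>
    rw [shortestSuffix]
    split
    · exact ih
    · assumption

theorem shortestSuffix_mem (hε : ([] : List A) ∉ I) {h : List A} (hh : h ∈ I) :
    shortestSuffix I h ∈ I := by
  induction h with
  | nil => exact absurd hh hε
  | cons c h ih =>
    rw [shortestSuffix]
    split
    · exact ih ‹h ∈ I›
    · exact hh

theorem shortestSuffix_of_tail_notMem {h : List A} (hh : h.tail ∉ I) :
    shortestSuffix I h = h := by
  cases h with
  | nil => rfl
  | cons c h => exact if_neg hh

theorem suffix_shortestSuffix {y h : List A} (hy : y <:+ h) (hty : y.tail ∉ I) :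
    y <:+ shortestSuffix I h := by
  induction h with
  | nil => simp_all [shortestSuffix]
  | cons c h ih =>
    rw [shortestSuffix]
    rcases List.suffix_cons_iff.mp hy with rfl | hy
    · exact if_neg hty ▸ List.suffix_rfl
    · split
      · exact ih hy
      · exact hy.trans (List.suffix_cons c h)

theorem shortestSuffix_append_of_mem (hI : IsIdealLang I) {w : List A} (hw : w ∈ I)
    (x : List A) : shortestSuffix I (x ++ w) = shortestSuffix I w := by
  induction x with
  | nil => rfl
  | cons c x ih => rw [List.cons_append, shortestSuffix, if_pos (hI.append_left_mem x hw), ih]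

theorem shortestSuffix_shortestSuffix_append (hI : IsIdealLang I) (h w : List A) :
    shortestSuffix I (shortestSuffix I h ++ w) = shortestSuffix I (h ++ w) := by
  induction h with
  | nil => rfl
  | cons c h ih =>
    rw [shortestSuffix]
    split
    · rw [ih, List.cons_append, shortestSuffix, if_pos (hI.append_right_mem w ‹h ∈ I›)]
    · rfl

end ShortestSuffix

namespace IdealAutomaton

variable {A : Type} {I : Set (List A)}

variable (I) in
def State : Type := {y : List A // y ∈ I ∧ y.tail ∉ I}

instance [Countable A] : Countable (State I) := Subtype.countable

noncomputable def State.ofMem (hε : ([] : List A) ∉ I) {w : List A} (hw : w ∈ I) : State I :=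
  ⟨shortestSuffix I w, shortestSuffix_mem hε hw, tail_shortestSuffix_notMem hε w⟩

theorem State.ofMem_val (hε : ([] : List A) ∉ I) (q : State I) : State.ofMem hε q.2.1 = q :=
  Subtype.ext (shortestSuffix_of_tail_notMem q.2.2)

variable (hI : IsIdealLang I) (hε : ([] : List A) ∉ I)

noncomputable def step (q : State I) (c : A) : State I :=
  State.ofMem hε (hI.append_right_mem [c] q.2.1)

theorem actW_step_val (q : State I) (w : List A) :
    (actW (step hI hε) q w).val = shortestSuffix I (q.val ++ w) := by
  induction w generalizing q with
  | nil => rw [List.append_nil, shortestSuffix_of_tail_notMem q.2.2]; rfl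
  | cons c w ih =>
    change (actW (step hI hε) (step hI hε q c) w).val = _
    rw [ih, step, State.ofMem, shortestSuffix_shortestSuffix_append hI, List.append_assoc,
      List.singleton_append]

theorem actW_step_of_mem {w : List A} (hw : w ∈ I) (q : State I) :
    actW (step hI hε) q w = State.ofMem hε hw :=
  Subtype.ext <| by rw [actW_step_val, shortestSuffix_append_of_mem hI hw]; rfl

theorem actW_step_self (p q : State I) : actW (step hI hε) p q.val = q := by
  rw [actW_step_of_mem hI hε q.2.1, State.ofMem_val]

theorem cons_suffix_actW_step {w : List A} (hw : w ∉ I) (q : State I) (a : A) :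
    a :: w <:+ (actW (step hI hε) (step hI hε q a) w).val := by
  rw [actW_step_val, step, State.ofMem, shortestSuffix_shortestSuffix_append hI,
    List.append_assoc, List.singleton_append]
  exact suffix_shortestSuffix (List.suffix_append _ _) hw

theorem synSet_step [Nontrivial A] : SynSet (step hI hε) = I := by
  ext w
  refine ⟨fun ⟨r, hr⟩ => ?_, fun hw => ⟨State.ofMem hε hw, actW_step_of_mem hI hε hw⟩⟩
  by_contra hw
  obtain ⟨a, b, hab⟩ := exists_pair_ne A
  have ha := cons_suffix_actW_step hI hε hw r a
  have hb := cons_suffix_actW_step hI hε hw r b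
  rw [hr] at ha hb
  exact hab (List.eq_of_cons_suffix_of_cons_suffix ha hb)

end IdealAutomaton

open IdealAutomaton in
/-- every nonempty ideal (not necessarily regular, `ε ∉ I`) over an
alphabet with at least two letters is the set of reset words of some strongly
connected synchronizing automaton with an at most countable state set. -/
theorem stmt14 {A : Type} [Fintype A] (hA : 1 < Fintype.card A)
    (I : Set (List A)) (hI : IsIdealLang I) (hne : I.Nonempty)
    (hε : ([] : List A) ∉ I) :
    ∃ (Q : Type) (_ : Countable Q) (_ : Nonempty Q) (δ : Q → A → Q),
      (∀ p q : Q, ∃ w : List A, actW δ p w = q) ∧ SynSet δ = I := by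
  obtain ⟨m, hm⟩ := hne
  have : Nontrivial A := Fintype.one_lt_card_iff_nontrivial.mp hA
  exact ⟨State I, inferInstance, ⟨State.ofMem hε hm⟩, step hI hε,
    fun p q => ⟨q.val, actW_step_self hI hε p q⟩, synSet_step hI hε⟩
end

section
/- Let Σ be a finite alphabet with at least two letters, let I ⊆ Σ* be a nonempty ideal with ε ∉ I, and let 𝓛 be a strongly connected synchronizing automaton with Syn(𝓛) = I having the universal property that every strongly connected synchronizing automaton 𝒜 with Syn(𝒜) = I admits a surjective automaton homomorphism from 𝓛 onto 𝒜. Then for any strongly connected synchronizing automaton 𝒜 with Syn(𝒜) = I, every surjective automaton homomorphism ψ : 𝒜 → 𝓛 is bijective, i.e. an isomorphism of automata. -/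
/-!
Composing `ψ` with a surjection `φ : 𝓛 → 𝒜` from the universal property gives an endomorphism
`ψ ∘ φ` of `𝓛`. An endomorphism of a synchronizing automaton fixes the state `q₀` onto which a
reset word collapses everything, and two homomorphisms out of a strongly connected automaton
that agree at one state agree everywhere; hence `ψ ∘ φ = id`. So `φ` is a bijection with
inverse `ψ`.
-/

section Automaton

variable {A Q T : Type*}

def IsAutHom (δ : Q → A → Q) (ξ : T → A → T) (f : Q → T) : Prop :=
  ∀ (q : Q) (a : A), f (δ q a) = ξ (f q) a

def IsStronglyConnected (δ : Q → A → Q) : Prop :=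
  ∀ p q : Q, ∃ w : List A, actW δ p w = q

variable {δ : Q → A → Q} {ξ : T → A → T}

theorem IsAutHom.map_actW {f : Q → T} (hf : IsAutHom δ ξ f) (q : Q) (w : List A) :
    f (actW δ q w) = actW ξ (f q) w := by
  induction w generalizing q with
  | nil => rfl
  | cons a w ih => exact (ih (δ q a)).trans (congrArg (actW ξ · w) (hf q a))

theorem IsAutHom.comp {R : Type*} {η : R → A → R} {f : Q → T} {g : T → R}
    (hg : IsAutHom ξ η g) (hf : IsAutHom δ ξ f) : IsAutHom δ η (g ∘ f) := fun q a => by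
  simp only [Function.comp_apply, hf q a, hg (f q) a]

theorem IsAutHom.eq_of_eq_at (hδ : IsStronglyConnected δ) {f g : Q → T}
    (hf : IsAutHom δ ξ f) (hg : IsAutHom δ ξ g) {q₀ : Q} (h : f q₀ = g q₀) : f = g := by
  funext q
  obtain ⟨w, rfl⟩ := hδ q₀ q
  rw [hf.map_actW, hg.map_actW, h]

theorem IsAutHom.apply_eq_of_reset {f : Q → Q} (hf : IsAutHom δ δ f) {w : List A} {q₀ : Q}
    (hw : ∀ p, actW δ p w = q₀) : f q₀ = q₀ := by
  calc f q₀ = f (actW δ q₀ w) := by rw [hw]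
    _ = actW δ (f q₀) w := hf.map_actW q₀ w
    _ = q₀ := hw (f q₀)

theorem IsAutHom.eq_id_of_synchronizing (hδ : IsStronglyConnected δ) (hsyn : (SynSet δ).Nonempty)
    {f : Q → Q} (hf : IsAutHom δ δ f) : f = id := by
  obtain ⟨w, q₀, hw⟩ := hsyn
  exact hf.eq_of_eq_at hδ (fun _ _ => rfl) (hf.apply_eq_of_reset hw)

end Automaton

theorem stmt16_general {A : Type}
    (I : Set (List A)) (hne : I.Nonempty)
    (L : Type) (ξ : L → A → L)
    (hLsc : ∀ p q : L, ∃ w : List A, actW ξ p w = q) (hLsyn : SynSet ξ = I)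
    (huniv : ∀ (Q : Type) (_ : Nonempty Q) (δ : Q → A → Q),
        (∀ p q : Q, ∃ w : List A, actW δ p w = q) → SynSet δ = I →
        ∃ φ : L → Q, Function.Surjective φ ∧ ∀ (l : L) (a : A), φ (ξ l a) = δ (φ l) a)
    (Q : Type) [Nonempty Q] (δ : Q → A → Q)
    (hQsc : ∀ p q : Q, ∃ w : List A, actW δ p w = q) (hQsyn : SynSet δ = I)
    (ψ : Q → L) (hψsurj : Function.Surjective ψ)
    (hψhom : ∀ (q : Q) (a : A), ψ (δ q a) = ξ (ψ q) a) :
    Function.Bijective ψ := by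
  obtain ⟨φ, hφsurj, hφhom⟩ := huniv Q ‹_› δ hQsc hQsyn
  have hψφ : ψ ∘ φ = id :=
    IsAutHom.eq_id_of_synchronizing hLsc (hLsyn ▸ hne) (IsAutHom.comp hψhom hφhom)
  have hφψ : Function.RightInverse ψ φ :=
    Function.LeftInverse.rightInverse_of_surjective (congrFun hψφ) hφsurj
  exact ⟨hφψ.injective, hψsurj⟩

/-- uniqueness of the maximal lifted strongly connected automaton: if
`𝓛` has the universal property, then any surjective homomorphism `ψ : 𝒜 → 𝓛` from a
strongly connected synchronizing automaton `𝒜` with `Syn(𝒜) = I` is bijective. -/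
theorem stmt16 {A : Type} [Fintype A] (hA : 1 < Fintype.card A)
    (I : Set (List A)) (hI : IsIdealLang I) (hne : I.Nonempty)
    (hε : ([] : List A) ∉ I)
    (L : Type) [Nonempty L] (ξ : L → A → L)
    (hLsc : ∀ p q : L, ∃ w : List A, actW ξ p w = q) (hLsyn : SynSet ξ = I)
    (huniv : ∀ (Q : Type) (_ : Nonempty Q) (δ : Q → A → Q),
        (∀ p q : Q, ∃ w : List A, actW δ p w = q) → SynSet δ = I →
        ∃ φ : L → Q, Function.Surjective φ ∧ ∀ (l : L) (a : A), φ (ξ l a) = δ (φ l) a)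
    (Q : Type) [Nonempty Q] (δ : Q → A → Q)
    (hQsc : ∀ p q : Q, ∃ w : List A, actW δ p w = q) (hQsyn : SynSet δ = I)
    (ψ : Q → L) (hψsurj : Function.Surjective ψ)
    (hψhom : ∀ (q : Q) (a : A), ψ (δ q a) = ξ (ψ q) a) :
    Function.Bijective ψ :=
  stmt16_general I hne L ξ hLsc hLsyn huniv Q δ hQsc hQsyn ψ hψsurj hψhom
end

section
/- Let Σ be a finite alphabet, I ⊆ Σ* a nonempty ideal with ε ∉ I, M = 𝓜(I), m = ‖I‖, and for u ∈ Σ* let ω(u) be the set of triples (h, tr(s), s⁻¹M) over suffixes s of u with s⁻¹M ≠ ∅ (h the first letter of s, or ε if s = ε). Then for all u ∈ Σ* and a ∈ Σ: ω(u·a) = {(c, t + e_a, a⁻¹D) : (c, t, D) ∈ ω(u), c ∈ Σ, a⁻¹D ≠ ∅} ∪ {(a, e_a, a⁻¹M) : if a⁻¹M ≠ ∅} ∪ {(ε, 0, M)}, where e_a : Σ → ZMod m is the indicator function of the letter a. In particular, if ω(u) = ω(v) then ω(u·a) = ω(v·a) for every a ∈ Σ. -/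
/-- The trace of a word: the number of occurrences of each letter, modulo `m`. -/
def traceW {A : Type*} [DecidableEq A] (m : ℕ) (u : List A) : A → ZMod m :=
  fun a => (u.count a : ZMod m)

/-- `ω(u)`: the set of triples `(h, tr(s), s⁻¹𝓜(I))` where `s` ranges over the
suffixes of `u` with `s⁻¹𝓜(I) ≠ ∅`, and `h` is the first letter of `s`
(`none` when `s = ε`). -/
def omegaSet {A : Type*} [DecidableEq A] (I : Set (List A)) (m : ℕ) (u : List A) :
    Set (Option A × (A → ZMod m) × Set (List A)) :=
  {t | ∃ s : List A, s <:+ u ∧ (lquot (MinWords I) s).Nonempty ∧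
        t = (s.head?, traceW m s, lquot (MinWords I) s)}


/-!
The suffixes of `u·a` are `ε` and the words `s·a` with `s` a suffix of `u`. The triple of `s·a`
comes from that of `s` by adding `e_a` to the trace and taking the quotient by `a`; the condition
`(s·a)⁻¹M ≠ ∅` already forces `s⁻¹M ≠ ∅`, and the head is unchanged unless `s = ε`. The triple
`(ε, 0, M)` of the empty suffix is always present because a shortest word of `I` lies in `M`.
-/

section

variable {A : Type*}

@[simp]
lemma lquot_nil (L : Set (List A)) : lquot L [] = L := by
  ext w; simp [lquot]

lemma lquot_append (L : Set (List A)) (s t : List A) :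
    lquot L (s ++ t) = lquot (lquot L s) t := by
  ext w; simp [lquot, List.append_assoc]

lemma Set.Nonempty.of_lquot_append {L : Set (List A)} {s t : List A}
    (h : (lquot L (s ++ t)).Nonempty) : (lquot L s).Nonempty :=
  let ⟨w, hw⟩ := h
  ⟨t ++ w, by simpa [lquot] using hw⟩

@[simp]
lemma traceW_nil [DecidableEq A] (m : ℕ) : traceW m ([] : List A) = 0 := by
  funext b; simp [traceW]

lemma traceW_append [DecidableEq A] (m : ℕ) (s t : List A) :
    traceW m (s ++ t) = traceW m s + traceW m t := by
  funext b; simp [traceW, List.count_append]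

lemma minWords_nonempty {I : Set (List A)} (hne : I.Nonempty) : (MinWords I).Nonempty := by
  have hlen : {k | ∃ u ∈ I, u.length = k}.Nonempty := hne.image List.length
  obtain ⟨w, hwI, hw⟩ := Nat.sInf_mem hlen
  refine ⟨w, hwI, ?_⟩
  rintro (⟨x, u, hx, huI, rfl⟩ | ⟨u, x, huI, hx, rfl⟩) <;>
  · have hu : sInf {k | ∃ u ∈ I, u.length = k} ≤ u.length := Nat.sInf_le ⟨u, huI, rfl⟩
    have hx : x.length ≠ 0 := by simpa using hx
    simp only [List.length_append] at hw
    omega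

theorem omegaSet_append_singleton [DecidableEq A] {I : Set (List A)} (hne : I.Nonempty)
    (m : ℕ) (u : List A) (a : A) :
    omegaSet I m (u ++ [a]) =
      {t | ∃ (c : A) (tr : A → ZMod m) (D : Set (List A)),
            (some c, tr, D) ∈ omegaSet I m u ∧ (lquot D [a]).Nonempty ∧
            t = (some c, tr + traceW m [a], lquot D [a])}
      ∪ {t | (lquot (MinWords I) [a]).Nonempty ∧
            t = (some a, traceW m [a], lquot (MinWords I) [a])}
      ∪ {(none, 0, MinWords I)} := by
  ext t
  simp only [omegaSet, List.suffix_concat_iff, Set.mem_union, Set.mem_ofPred_eq,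
    Set.mem_singleton_iff]
  constructor
  · rintro ⟨s, rfl | ⟨r, rfl, hr⟩, hs, rfl⟩
    · simp
    · rcases r with _ | ⟨c, r⟩
      · exact Or.inl (Or.inr ⟨hs, rfl⟩)
      · refine Or.inl (Or.inl ⟨c, _, _, ⟨c :: r, hr, hs.of_lquot_append, rfl⟩, ?_, ?_⟩)
        · rwa [← lquot_append]
        · rw [lquot_append, traceW_append]
          rfl
  · rintro ((⟨c, tr, D, ⟨s, hs, -, hcs⟩, hD, rfl⟩ | ⟨hM, rfl⟩) | rfl)
    · simp only [Prod.mk.injEq] at hcs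
      obtain ⟨hc, rfl, rfl⟩ := hcs
      rcases s with _ | ⟨c', s⟩
      · simp at hc
      obtain rfl : c = c' := by simpa using hc
      refine ⟨c :: s ++ [a], Or.inr ⟨_, rfl, hs⟩, by rwa [lquot_append], ?_⟩
      rw [lquot_append, traceW_append]
      rfl
    · exact ⟨[a], Or.inr ⟨[], rfl, List.nil_suffix⟩, hM, rfl⟩
    · exact ⟨[], Or.inl rfl, minWords_nonempty hne, by simp⟩

end

theorem stmt17_general {A : Type*} [DecidableEq A]
    (I : Set (List A)) (hne : I.Nonempty)
    (m : ℕ) :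
    (∀ (u : List A) (a : A),
      omegaSet I m (u ++ [a]) =
        {t | ∃ (c : A) (tr : A → ZMod m) (D : Set (List A)),
              (some c, tr, D) ∈ omegaSet I m u ∧ (lquot D [a]).Nonempty ∧
              t = (some c, tr + traceW m [a], lquot D [a])}
        ∪ {t | (lquot (MinWords I) [a]).Nonempty ∧
              t = (some a, traceW m [a], lquot (MinWords I) [a])}
        ∪ {(none, 0, MinWords I)}) ∧
    (∀ (u v : List A) (a : A), omegaSet I m u = omegaSet I m v →
        omegaSet I m (u ++ [a]) = omegaSet I m (v ++ [a])) :=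
  ⟨omegaSet_append_singleton hne m, fun u v a h => by
    rw [omegaSet_append_singleton hne, omegaSet_append_singleton hne, h]⟩

/-- the explicit formula for the action of a letter on `ω(u)`; in
particular `ω(u) = ω(v)` implies `ω(u·a) = ω(v·a)`. -/
theorem stmt17 {A : Type*} [Fintype A] [DecidableEq A]
    (I : Set (List A)) (hI : IsIdealLang I) (hne : I.Nonempty)
    (hε : ([] : List A) ∉ I)
    (m : ℕ) (hm : m = normL I) :
    (∀ (u : List A) (a : A),
      omegaSet I m (u ++ [a]) =
        {t | ∃ (c : A) (tr : A → ZMod m) (D : Set (List A)),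
              (some c, tr, D) ∈ omegaSet I m u ∧ (lquot D [a]).Nonempty ∧
              t = (some c, tr + traceW m [a], lquot D [a])}
        ∪ {t | (lquot (MinWords I) [a]).Nonempty ∧
              t = (some a, traceW m [a], lquot (MinWords I) [a])}
        ∪ {(none, 0, MinWords I)}) ∧
    (∀ (u v : List A) (a : A), omegaSet I m u = omegaSet I m v →
        omegaSet I m (u ++ [a]) = omegaSet I m (v ++ [a])) :=
  stmt17_general I hne m
end
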